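/- arXiv:1209.3467 — 2 statements merged into one kernel-verified Lean document; each statement's English description precedes it below -/
import Mathlib

section
/- Let G be a group and let n, k be positive integers with 1 ≤ k ≤ n. Every element of N_{n,k}(G) can be written in the form a_k^{4^{n-k}} · a_{k+1}^{4^{n-k-1}} ⋯ a_{n-1}^{4} · a_n for suitable elements a_j ∈ γ_j(G) (k ≤ j ≤ n). -/
/-- `H^m`: the subgroup generated by the `m`-th powers of elements of `H`. -/
def sPow {G : Type*} [Group G] (H : Subgroup G) (m : ℕ) : Subgroup G :=
  Subgroup.closure ((fun h => h ^ m) '' (H : Set G))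

/-- `γ_n(G)`, the lower central series indexed so that `γ_1(G) = G`. -/
def gamma (G : Type*) [Group G] (n : ℕ) : Subgroup G :=
  (⊤ : Subgroup G).lowerCentralSeries (n - 1)

/-- `N_{n,k}(G) = γ_k(G)^{4^{n-k}} ⋯ γ_n(G)` (product of normal subgroups = join). -/
def Nnk (G : Type*) [Group G] (n k : ℕ) : Subgroup G :=
  ⨆ i ∈ Finset.Icc k n, sPow (gamma G i) (4 ^ (n - i))

/-- The `λ̄`-series: `λ̄_1(G) = G`, `λ̄_{n+1}(G) = λ̄_n(G)^4 [λ̄_n(G), G]`. -/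
def lambdaBar (G : Type*) [Group G] : ℕ → Subgroup G
  | 0 => ⊤
  | 1 => ⊤
  | (n + 2) => sPow (lambdaBar G (n + 1)) 4 ⊔ ⁅lambdaBar G (n + 1), (⊤ : Subgroup G)⁆

/-- The lower `p`-central series: `λ_1(G) = G`, `λ_{n+1}(G) = λ_n(G)^p [λ_n(G), G]`. -/
def lowP (G : Type*) [Group G] (p : ℕ) : ℕ → Subgroup G
  | 0 => ⊤
  | 1 => ⊤
  | (n + 2) => sPow (lowP G p (n + 1)) p ⊔ ⁅lowP G p (n + 1), (⊤ : Subgroup G)⁆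

/-- `Ω_i(G)`: subgroup generated by elements of order dividing `p^i`. -/
def Omega (G : Type*) [Group G] (p i : ℕ) : Subgroup G :=
  Subgroup.closure {x : G | x ^ p ^ i = 1}

/-- A finite `p`-group is `p`-central if `Ω_1(G) ≤ Z(G)` for odd `p`,
resp. `Ω_2(G) ≤ Z(G)` for `p = 2`. -/
def IsPCentral (p : ℕ) (G : Type*) [Group G] : Prop :=
  if p = 2 then Omega G 2 2 ≤ Subgroup.center G else Omega G p 1 ≤ Subgroup.center G

instance gamma_normal (G : Type*) [Group G] (n : ℕ) : (gamma G n).Normal :=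
  inferInstanceAs ((⊤ : Subgroup G).lowerCentralSeries (n - 1)).Normal

instance sPow_normal {G : Type*} [Group G] (H : Subgroup G) [hH : H.Normal] (m : ℕ) :
    (sPow H m).Normal := by
  constructor
  intro x hx g
  induction hx using Subgroup.closure_induction with
  | mem y hy =>
    obtain ⟨h, hh, rfl⟩ := hy
    exact Subgroup.subset_closure ⟨g * h * g⁻¹, hH.conj_mem h hh g, by
      simp [conj_pow]⟩
  | one => simpa using (sPow H m).one_mem
  | mul a b _ _ ha hb =>
    have : g * (a * b) * g⁻¹ = (g * a * g⁻¹) * (g * b * g⁻¹) := by group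
    rw [this]; exact (sPow H m).mul_mem ha hb
  | inv a _ ha =>
    have : g * a⁻¹ * g⁻¹ = (g * a * g⁻¹)⁻¹ := by group
    rw [this]; exact (sPow H m).inv_mem ha

theorem normal_iSup {G : Type*} [Group G] {ι : Sort*} (f : ι → Subgroup G)
    (h : ∀ i, (f i).Normal) : (⨆ i, f i).Normal := by
  constructor
  intro x hx g
  refine Subgroup.iSup_induction f (C := fun y => g * y * g⁻¹ ∈ ⨆ i, f i) hx
    (fun i y hy => Subgroup.mem_iSup_of_mem i ((h i).conj_mem y hy g)) (by simpa using Subgroup.one_mem (⨆ i, f i)) ?_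
  intro a b ha hb
  have : g * (a * b) * g⁻¹ = (g * a * g⁻¹) * (g * b * g⁻¹) := by group
  rw [this]; exact Subgroup.mul_mem _ ha hb

instance Nnk_normal (G : Type*) [Group G] (n k : ℕ) : (Nnk G n k).Normal :=
  normal_iSup _ fun i => normal_iSup _ fun _ => inferInstance

instance lambdaBar_normal (G : Type*) [Group G] : ∀ n, (lambdaBar G n).Normal
  | 0 => inferInstanceAs (⊤ : Subgroup G).Normal
  | 1 => inferInstanceAs (⊤ : Subgroup G).Normal
  | (n + 2) => by
    haveI := lambdaBar_normal G (n + 1)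
    exact inferInstanceAs
      (sPow (lambdaBar G (n + 1)) 4 ⊔ ⁅lambdaBar G (n + 1), (⊤ : Subgroup G)⁆).Normal

instance lowP_normal (G : Type*) [Group G] (p : ℕ) : ∀ n, (lowP G p n).Normal
  | 0 => inferInstanceAs (⊤ : Subgroup G).Normal
  | 1 => inferInstanceAs (⊤ : Subgroup G).Normal
  | (n + 2) => by
    haveI := lowP_normal G p (n + 1)
    exact inferInstanceAs
      (sPow (lowP G p (n + 1)) p ⊔ ⁅lowP G p (n + 1), (⊤ : Subgroup G)⁆).Normal


/-!
Work with any sequence of normal subgroups `A i` with `⁅A i, G⁆ ≤ A (i + 1)` and any exponent `p`,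
and write `N(n, k) = A_k^{p^{n-k}} ⋯ A_n`. By induction on `n - k`, `⁅N(n, k), G⁆ ≤ N(n+1, k+1)`:
for a generator `y^{p^{t+1}}` of `N(k+t+1, k)` with `y ∈ A_k`, the commutator `⁅y^{p^t}, g⁆` lies in
`N(k+t+1, k+1)`, hence is central of exponent `p` modulo `N(k+t+2, k+1)`. As `N(n, k)` is thus
central modulo `N(n+1, k+1)`, we get `N(n, k)^p ≤ N(n+1, k)` and, for `a ∈ A_k`,
`(a b)^{p^{n-k}} ≡ a^{p^{n-k}} b^{p^{n-k}}` modulo `N(n, k+1)`. So `a ↦ a^{p^{n-k}}` is a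
homomorphism `A_k → G ⧸ N(n, k+1)`, every element of `N(n, k)` is `a^{p^{n-k}}` times an element
of `N(n, k+1)`, and induction on `n - k` gives the normal form.
-/

open scoped commutatorElement

section GroupLemmas

variable {G : Type*} [Group G]

theorem commutatorElement_pow_left_of_commute {u g : G} (h : Commute u ⁅u, g⁆) (n : ℕ) :
    ⁅u ^ n, g⁆ = ⁅u, g⁆ ^ n := by
  induction n with
  | zero => simp
  | succ n ih =>
    calc ⁅u ^ (n + 1), g⁆ = u * ⁅u ^ n, g⁆ * u⁻¹ * ⁅u, g⁆ := by
          simp only [pow_succ', commutatorElement_def]; group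
      _ = ⁅u, g⁆ ^ (n + 1) := by
          rw [ih, (h.pow_right n).eq, mul_inv_cancel_right, pow_succ]

theorem commute_mk'_of_commutatorElement_mem {M : Subgroup G} [M.Normal] {a b : G}
    (h : ⁅a, b⁆ ∈ M) : Commute (QuotientGroup.mk' M a) (QuotientGroup.mk' M b) := by
  rwa [← commutatorElement_eq_one_iff_commute, ← map_commutatorElement, ← MonoidHom.mem_ker,
    QuotientGroup.ker_mk']

theorem commutatorElement_pow_mem {M : Subgroup G} [M.Normal] {u g : G} {p : ℕ}
    (hcomm : ⁅⁅u, g⁆, u⁆ ∈ M) (hpow : ⁅u, g⁆ ^ p ∈ M) : ⁅u ^ p, g⁆ ∈ M := by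
  have hc := commute_mk'_of_commutatorElement_mem hcomm
  rw [map_commutatorElement] at hc
  rw [← QuotientGroup.ker_mk' M, MonoidHom.mem_ker] at hpow ⊢
  rw [map_pow, map_commutatorElement] at hpow
  rw [map_commutatorElement, map_pow, commutatorElement_pow_left_of_commute hc.symm, hpow]

theorem pow_mem_of_commutator_closure_le {S : Set G} {M : Subgroup G} [M.Normal]
    (hS : ⁅Subgroup.closure S, Subgroup.closure S⁆ ≤ M) {p : ℕ} (hp : ∀ s ∈ S, s ^ p ∈ M)
    {x : G} (hx : x ∈ Subgroup.closure S) : x ^ p ∈ M := by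
  induction hx using Subgroup.closure_induction with
  | mem s hs => exact hp s hs
  | one => simp
  | mul a b ha hb iha ihb =>
    have hab :=
      commute_mk'_of_commutatorElement_mem (hS (Subgroup.commutator_mem_commutator ha hb))
    rw [← QuotientGroup.ker_mk' M, MonoidHom.mem_ker] at iha ihb ⊢
    rw [map_pow, map_mul, hab.mul_pow, ← map_pow, ← map_pow, iha, ihb, one_mul]
  | inv a _ iha => simpa using inv_mem iha

theorem commutator_top_le_iff_le_upperCentralSeriesStep {H M : Subgroup G} [M.Normal] :
    ⁅H, ⊤⁆ ≤ M ↔ H ≤ Subgroup.upperCentralSeriesStep M := by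
  rw [Subgroup.commutator_le]
  simp [SetLike.le_def, Subgroup.mem_upperCentralSeriesStep]

theorem pow_mem_sPow {H : Subgroup G} {h : G} (hh : h ∈ H) (m : ℕ) : h ^ m ∈ sPow H m :=
  Subgroup.subset_closure ⟨h, hh, rfl⟩

theorem sPow_one (H : Subgroup G) : sPow H 1 = H := by
  simp [sPow, Subgroup.closure_eq]

end GroupLemmas

/-- `Nnk G n k` is `sPowSup (gamma G) 4 n k`. -/
def sPowSup {G : Type*} [Group G] (A : ℕ → Subgroup G) (p n k : ℕ) : Subgroup G :=
  ⨆ i ∈ Finset.Icc k n, sPow (A i) (p ^ (n - i))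

namespace sPowSup

variable {G : Type*} [Group G] {A : ℕ → Subgroup G} {p : ℕ}

instance normal [∀ i, (A i).Normal] (n k : ℕ) : (sPowSup A p n k).Normal :=
  normal_iSup _ fun _ => normal_iSup _ fun _ => inferInstance

theorem sPow_le {n k i : ℕ} (hki : k ≤ i) (hin : i ≤ n) :
    sPow (A i) (p ^ (n - i)) ≤ sPowSup A p n k :=
  le_iSup₂_of_le i (Finset.mem_Icc.mpr ⟨hki, hin⟩) le_rfl

theorem pow_mem {n k i : ℕ} (hki : k ≤ i) (hin : i ≤ n) {y : G} (hy : y ∈ A i) :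
    y ^ p ^ (n - i) ∈ sPowSup A p n k :=
  sPow_le hki hin (pow_mem_sPow hy _)

theorem antitone (n : ℕ) : Antitone (sPowSup A p n) := fun _ _ h =>
  iSup₂_le fun _ hi => sPow_le (h.trans (Finset.mem_Icc.mp hi).1) (Finset.mem_Icc.mp hi).2

theorem eq_bot_of_lt {n k : ℕ} (h : n < k) : sPowSup A p n k = ⊥ := by
  simp [sPowSup, Finset.Icc_eq_empty_of_lt h]

theorem self (n : ℕ) : sPowSup A p n n = A n := by
  simp [sPowSup, sPow_one]

theorem eq_sup {n k : ℕ} (h : k ≤ n) :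
    sPowSup A p n k = sPow (A k) (p ^ (n - k)) ⊔ sPowSup A p n (k + 1) := by
  rw [sPowSup, ← Finset.insert_Icc_add_one_left_eq_Icc h, Finset.iSup_insert]
  rfl

theorem eq_closure (n k : ℕ) :
    sPowSup A p n k =
      Subgroup.closure (⋃ i ∈ Finset.Icc k n, (fun y => y ^ p ^ (n - i)) '' (A i : Set G)) := by
  simp only [Subgroup.closure_iUnion]
  rfl

variable [∀ i, (A i).Normal]

theorem pow_mem_of_commutator_top_le {n k : ℕ}
    (h : ⁅sPowSup A p n k, ⊤⁆ ≤ sPowSup A p (n + 1) (k + 1)) {x : G}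
    (hx : x ∈ sPowSup A p n k) : x ^ p ∈ sPowSup A p (n + 1) k := by
  rw [eq_closure n k] at h hx
  refine pow_mem_of_commutator_closure_le
    ((Subgroup.commutator_mono le_rfl le_top).trans (h.trans (antitone _ k.le_succ))) ?_ hx
  simp only [Set.mem_iUnion, Set.mem_image, Finset.mem_Icc]
  rintro _ ⟨i, ⟨hki, hin⟩, y, hy, rfl⟩
  rw [← pow_mul, ← pow_succ, show n - i + 1 = n + 1 - i by omega]
  exact pow_mem hki (by omega) hy

theorem commutator_top_le (hA : ∀ i, ⁅A i, ⊤⁆ ≤ A (i + 1)) (n k : ℕ) :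
    ⁅sPowSup A p n k, ⊤⁆ ≤ sPowSup A p (n + 1) (k + 1) := by
  rcases lt_or_ge n k with hnk | hkn
  · simp [eq_bot_of_lt hnk]
  obtain ⟨t, rfl⟩ := Nat.exists_eq_add_of_le hkn
  clear hkn
  induction t generalizing k with
  | zero => simpa [self] using hA k
  | succ t ih =>
    have ih' := ih (k + 1)
    rw [Nat.add_right_comm k 1 t] at ih'
    rw [eq_sup (by omega), commutator_top_le_iff_le_upperCentralSeriesStep]
    refine sup_le ?_ (commutator_top_le_iff_le_upperCentralSeriesStep.mp
      (ih'.trans (antitone _ (Nat.le_succ _))))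
    rw [sPow, Subgroup.closure_le]
    rintro _ ⟨y, hy, rfl⟩ g
    have hy' : y ^ p ^ t ∈ sPowSup A p (k + t) k := by
      simpa using pow_mem (n := k + t) le_rfl (by omega) hy
    have he : ⁅y ^ p ^ t, g⁆ ∈ sPowSup A p (k + t + 1) (k + 1) :=
      ih k (Subgroup.commutator_mem_commutator hy' (Subgroup.mem_top g))
    change ⁅y ^ p ^ (k + (t + 1) - k), g⁆ ∈ _
    rw [show k + (t + 1) - k = t + 1 by omega, pow_succ, pow_mul, ← add_assoc]
    refine commutatorElement_pow_mem ?_ (pow_mem_of_commutator_top_le ih' he)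
    exact antitone _ (Nat.le_succ _)
      (ih' (Subgroup.commutator_mem_commutator he (Subgroup.mem_top _)))

theorem pow_mul_pow_inv_mul_mul_pow_mem (hA : ∀ i, ⁅A i, ⊤⁆ ≤ A (i + 1)) {n k : ℕ}
    (hkn : k ≤ n) {a : G} (ha : a ∈ A k) (b : G) :
    (a ^ p ^ (n - k) * b ^ p ^ (n - k))⁻¹ * (a * b) ^ p ^ (n - k) ∈ sPowSup A p n (k + 1) := by
  induction n, hkn using Nat.le_induction with
  | base => simp
  | succ n hkn ih =>
    rw [show n + 1 - k = n - k + 1 by omega, pow_succ, pow_mul, pow_mul, pow_mul]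
    set m := p ^ (n - k)
    set q := (a ^ m * b ^ m)⁻¹ * (a * b) ^ m
    set M := sPowSup A p (n + 1) (k + 1)
    have hqp : q ^ p ∈ M := pow_mem_of_commutator_top_le (commutator_top_le hA n (k + 1)) ih
    have hq : Commute (QuotientGroup.mk' M (a ^ m * b ^ m)) (QuotientGroup.mk' M q) :=
      (commute_mk'_of_commutatorElement_mem (antitone _ (Nat.le_succ _)
        (commutator_top_le hA n (k + 1)
          (Subgroup.commutator_mem_commutator ih (Subgroup.mem_top _))))).symm
    have hab : Commute (QuotientGroup.mk' M (a ^ m)) (QuotientGroup.mk' M (b ^ m)) :=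
      commute_mk'_of_commutatorElement_mem (commutator_top_le hA n k
        (Subgroup.commutator_mem_commutator (pow_mem le_rfl hkn ha) (Subgroup.mem_top _)))
    have hsplit : (a * b) ^ m = a ^ m * b ^ m * q := (mul_inv_cancel_left _ _).symm
    rw [← QuotientGroup.ker_mk' M, MonoidHom.mem_ker] at hqp
    have key : QuotientGroup.mk' M ((a ^ m * b ^ m * q) ^ p) =
        QuotientGroup.mk' M ((a ^ m) ^ p * (b ^ m) ^ p) := by
      rw [map_pow, map_mul _ _ q, hq.mul_pow, ← map_pow _ q, hqp, mul_one, map_mul, hab.mul_pow]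
      simp only [map_mul, map_pow]
    rw [hsplit, ← QuotientGroup.ker_mk' M, MonoidHom.mem_ker, map_mul, key, map_inv,
      inv_mul_cancel]

theorem exists_pow_mul_of_mem (hA : ∀ i, ⁅A i, ⊤⁆ ≤ A (i + 1)) {n k : ℕ} (hkn : k ≤ n) {x : G}
    (hx : x ∈ sPowSup A p n k) :
    ∃ a ∈ A k, ∃ y ∈ sPowSup A p n (k + 1), x = a ^ p ^ (n - k) * y := by
  let f : A k →* G ⧸ sPowSup A p n (k + 1) :=
    MonoidHom.mk' (fun a => ((a : G) ^ p ^ (n - k) : G)) fun a b => by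
      rw [← QuotientGroup.mk_mul, eq_comm, QuotientGroup.eq]
      exact pow_mul_pow_inv_mul_mul_pow_mem hA hkn a.2 b
  have hle : sPowSup A p n k ≤ f.range.comap (QuotientGroup.mk' _) := by
    rw [eq_sup hkn, sup_le_iff, sPow, Subgroup.closure_le]
    refine ⟨?_, fun y hy => ⟨1, ?_⟩⟩
    · rintro _ ⟨a, ha, rfl⟩
      exact ⟨⟨a, ha⟩, rfl⟩
    · simp [(QuotientGroup.eq_one_iff y).mpr hy]
  obtain ⟨⟨a, ha⟩, hfa⟩ := hle hx
  exact ⟨a, ha, _, QuotientGroup.eq.mp hfa, (mul_inv_cancel_left _ _).symm⟩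

theorem exists_prod_pow_of_mem (hA : ∀ i, ⁅A i, ⊤⁆ ≤ A (i + 1)) {n k : ℕ} {x : G}
    (hx : x ∈ sPowSup A p n k) :
    ∃ a : ℕ → G, (∀ j, k ≤ j → j ≤ n → a j ∈ A j) ∧
      x = ((List.range' k (n + 1 - k)).map fun j => a j ^ p ^ (n - j)).prod := by
  induction hd : n + 1 - k generalizing k x with
  | zero =>
    rw [eq_bot_of_lt (by omega), Subgroup.mem_bot] at hx
    exact ⟨1, fun j hkj hjn => by omega, by simp [hx]⟩
  | succ d ih =>
    obtain ⟨b, hb, y, hy, rfl⟩ := exists_pow_mul_of_mem hA (by omega) hx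
    obtain ⟨a, ha, rfl⟩ := ih hy (by omega)
    refine ⟨Function.update a k b, fun j hkj hjn => ?_, ?_⟩
    · rcases hkj.eq_or_lt with rfl | hkj
      · simpa using hb
      · simpa [Function.update_of_ne hkj.ne'] using ha j hkj hjn
    · rw [List.range'_succ, List.map_cons, List.prod_cons, Function.update_self]
      congr 2
      refine List.map_congr_left fun j hj => ?_
      rw [List.mem_range'_1] at hj
      rw [Function.update_of_ne (by omega)]

end sPowSup

theorem commutator_gamma_top_le (G : Type*) [Group G] (i : ℕ) :
    ⁅gamma G i, ⊤⁆ ≤ gamma G (i + 1) := by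
  cases i with
  | zero => exact le_top
  | succ i => exact le_rfl

theorem stmt_4_general (G : Type*) [Group G] (n k : ℕ)
    (x : G) (hx : x ∈ Nnk G n k) :
    ∃ a : ℕ → G, (∀ j, k ≤ j → j ≤ n → a j ∈ gamma G j) ∧
      x = ((List.range' k (n + 1 - k)).map (fun j => a j ^ 4 ^ (n - j))).prod :=
  sPowSup.exists_prod_pow_of_mem (commutator_gamma_top_le G) hx

theorem stmt_4 (G : Type*) [Group G] (n k : ℕ) (hk : 1 ≤ k) (hkn : k ≤ n)
    (x : G) (hx : x ∈ Nnk G n k) :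
    ∃ a : ℕ → G, (∀ j, k ≤ j → j ≤ n → a j ∈ gamma G j) ∧
      x = ((List.range' k (n + 1 - k)).map (fun j => a j ^ 4 ^ (n - j))).prod :=
  stmt_4_general G n k x hx
end

section
/- Let G be a group and let n, j be positive integers with 1 ≤ j ≤ n. If x ∈ γ_j(G) and y ∈ γ_j(G)^4 · γ_{j+1}(G), then x^{-4^{n-j}} · (xy)^{4^{n-j}} ∈ N_{n+1,j}(G); that is, (xy)^{4^{n-j}} ≡ x^{4^{n-j}} modulo N_{n+1,j}(G). -/
/-!
Write `N m k` for `N_{m,k}(G)`. Two facts about consecutive terms drive everything: `N m k` is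
central modulo `N (m+1) k`, and the fourth powers of its elements lie in `N (m+1) k`. Both reduce
to the generators `h ^ 4 ^ (m - i)`, `h ∈ γ_i`, for which `⁅h ^ 4 ^ t, g⁆ ∈ N (i+t+1) (i+1)` is
proved by strong induction on `t`: modulo `N (i+t+2) (i+1)` the commutator `c = ⁅h ^ 4 ^ t, g⁆`
is central, so `⁅h ^ 4 ^ (t+1), g⁆ ≡ c ^ 4 ≡ 1`. Finally, for `y ∈ N m k` the element
`z = (x ^ 4 ^ d)⁻¹ * (x * y) ^ 4 ^ d` is central modulo the next term, whence
`(x * y) ^ 4 ^ (d+1) ≡ x ^ 4 ^ (d+1) * z ^ 4 ≡ x ^ 4 ^ (d+1)`.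
-/

open scoped commutatorElement

theorem commutatorElement_pow_left_of_mem_center {Q : Type*} [Group Q] {a g : Q}
    (h : ⁅a, g⁆ ∈ Subgroup.center Q) (k : ℕ) : ⁅a ^ k, g⁆ = ⁅a, g⁆ ^ k := by
  induction k with
  | zero => simp
  | succ k ih =>
    rw [pow_succ', commutatorElement_mul_left_eq_conj_mul, ih,
      Subgroup.mem_center_iff.mp (pow_mem h k) a, mul_inv_cancel_right, pow_succ]

section CentralModulo

variable {G : Type*} [Group G] {N : Subgroup G} [N.Normal]

theorem commute_mk_of_mem_upperCentralSeriesStep {a : G} (ha : a ∈ N.upperCentralSeriesStep)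
    (b : G ⧸ N) : Commute (a : G ⧸ N) b := by
  rw [Subgroup.upperCentralSeriesStep_eq_comap_center] at ha
  exact ((Subgroup.mem_center_iff.mp ha) b).symm

theorem commutatorElement_pow_left_mem {a g : G} {k : ℕ}
    (hc : ⁅a, g⁆ ∈ N.upperCentralSeriesStep) (hk : ⁅a, g⁆ ^ k ∈ N) : ⁅a ^ k, g⁆ ∈ N := by
  rw [Subgroup.upperCentralSeriesStep_eq_comap_center, Subgroup.mem_comap,
    map_commutatorElement] at hc
  rw [← QuotientGroup.eq_one_iff] at hk ⊢
  rw [QuotientGroup.mk_pow, ← QuotientGroup.mk'_apply, map_commutatorElement] at hk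
  rw [← QuotientGroup.mk'_apply, map_commutatorElement, map_pow,
    commutatorElement_pow_left_of_mem_center hc, hk]

theorem inv_pow_mul_pow_mem {a b : G} {q : ℕ} (hab : a⁻¹ * b ∈ N.upperCentralSeriesStep)
    (hq : (a⁻¹ * b) ^ q ∈ N) : (a ^ q)⁻¹ * b ^ q ∈ N := by
  rw [← QuotientGroup.eq_one_iff] at hq ⊢
  have hb : (b : G ⧸ N) = a * ↑(a⁻¹ * b) := by simp
  rw [QuotientGroup.mk_mul, QuotientGroup.mk_inv, QuotientGroup.mk_pow, QuotientGroup.mk_pow, hb,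
    (commute_mk_of_mem_upperCentralSeriesStep hab _).symm.mul_pow, inv_mul_cancel_left,
    ← QuotientGroup.mk_pow, hq]

theorem pow_mem_of_mem_closure {S : Set G} {q : ℕ}
    (hS : Subgroup.closure S ≤ N.upperCentralSeriesStep) (hq : ∀ s ∈ S, s ^ q ∈ N) {z : G}
    (hz : z ∈ Subgroup.closure S) : z ^ q ∈ N := by
  induction hz using Subgroup.closure_induction with
  | mem s hs => exact hq s hs
  | one => simp
  | mul a b ha _ hqa hqb =>
    rw [← QuotientGroup.eq_one_iff] at hqa hqb ⊢
    rw [QuotientGroup.mk_pow, QuotientGroup.mk_mul,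
      (commute_mk_of_mem_upperCentralSeriesStep (hS ha) _).mul_pow, ← QuotientGroup.mk_pow,
      ← QuotientGroup.mk_pow, hqa, hqb, one_mul]
  | inv a _ hqa => rw [inv_pow]; exact inv_mem hqa

end CentralModulo

section Filtration

variable {G : Type*} [Group G]

theorem sPow_le_iff {H K : Subgroup G} {m : ℕ} : sPow H m ≤ K ↔ ∀ x ∈ H, x ^ m ∈ K := by
  rw [sPow, Subgroup.closure_le, Set.image_subset_iff]
  rfl

theorem commutatorElement_mem_gamma_succ {i : ℕ} {h : G} (hh : h ∈ gamma G i) (g : G) :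
    ⁅h, g⁆ ∈ gamma G (i + 1) := by
  cases i with
  | zero => exact Subgroup.mem_top _
  | succ i => exact Subgroup.commutator_mem_commutator hh (Subgroup.mem_top g)

theorem Nnk_le_iff {n k : ℕ} {K : Subgroup G} :
    Nnk G n k ≤ K ↔ ∀ i, k ≤ i → i ≤ n → ∀ x ∈ gamma G i, x ^ 4 ^ (n - i) ∈ K := by
  simp only [Nnk, iSup₂_le_iff, Finset.mem_Icc, sPow_le_iff, and_imp]

theorem pow_mem_Nnk {n k i : ℕ} (hki : k ≤ i) (hin : i ≤ n) {x : G} (hx : x ∈ gamma G i) :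
    x ^ 4 ^ (n - i) ∈ Nnk G n k :=
  Nnk_le_iff.mp le_rfl i hki hin x hx

theorem Nnk_anti {n k k' : ℕ} (h : k' ≤ k) : Nnk G n k ≤ Nnk G n k' :=
  Nnk_le_iff.mpr fun _ hki hin _ hx => pow_mem_Nnk (h.trans hki) hin hx

theorem Nnk_eq_closure (n k : ℕ) :
    Nnk G n k =
      Subgroup.closure (⋃ i ∈ Finset.Icc k n, (· ^ 4 ^ (n - i)) '' (gamma G i : Set G)) := by
  simp only [Nnk, sPow, Subgroup.closure_iUnion]

theorem Nnk_le_upperCentralSeriesStep_of {m k : ℕ}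
    (hA : ∀ i, k ≤ i → i ≤ m → ∀ h ∈ gamma G i, ∀ g,
      ⁅h ^ 4 ^ (m - i), g⁆ ∈ Nnk G (m + 1) (i + 1)) :
    Nnk G m k ≤ Subgroup.upperCentralSeriesStep (Nnk G (m + 1) k) :=
  Nnk_le_iff.mpr fun i hki him h hh g => Nnk_anti (k := i + 1) (by omega) (hA i hki him h hh g)

theorem pow_four_mem_Nnk_succ_of {m k : ℕ}
    (hC : Nnk G m k ≤ Subgroup.upperCentralSeriesStep (Nnk G (m + 1) k)) {z : G}
    (hz : z ∈ Nnk G m k) : z ^ 4 ∈ Nnk G (m + 1) k := by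
  rw [Nnk_eq_closure] at hC hz
  refine pow_mem_of_mem_closure hC ?_ hz
  simp only [Set.mem_iUnion, Finset.mem_Icc]
  rintro _ ⟨i, ⟨hki, him⟩, h, hh, rfl⟩
  rw [← pow_mul, ← pow_succ, show m - i + 1 = m + 1 - i by omega]
  exact pow_mem_Nnk hki (by omega) hh

theorem commutatorElement_pow_mem_Nnk (t i : ℕ) {h : G} (hh : h ∈ gamma G i) (g : G) :
    ⁅h ^ 4 ^ t, g⁆ ∈ Nnk G (i + t + 1) (i + 1) := by
  induction t using Nat.strong_induction_on generalizing i h g with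
  | _ t ih =>
    rcases t with _ | t
    · simpa using pow_mem_Nnk le_rfl le_rfl (commutatorElement_mem_gamma_succ hh g)
    · have hC : Nnk G (i + t + 1) (i + 1) ≤
          Subgroup.upperCentralSeriesStep (Nnk G (i + t + 2) (i + 1)) :=
        Nnk_le_upperCentralSeriesStep_of fun i' _ _ h' hh' g' => by
          have := ih (i + t + 1 - i') (by omega) i' hh' g'
          rwa [show i' + (i + t + 1 - i') + 1 = i + t + 1 + 1 by omega] at this
      have hc := ih t t.lt_succ_self i hh g
      rw [pow_succ, pow_mul, show i + (t + 1) + 1 = i + t + 1 + 1 by omega]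
      exact commutatorElement_pow_left_mem (hC hc) (pow_four_mem_Nnk_succ_of hC hc)

theorem Nnk_le_upperCentralSeriesStep (m k : ℕ) :
    Nnk G m k ≤ Subgroup.upperCentralSeriesStep (Nnk G (m + 1) k) :=
  Nnk_le_upperCentralSeriesStep_of fun i _ him h hh g => by
    simpa [show i + (m - i) + 1 = m + 1 by omega] using commutatorElement_pow_mem_Nnk (m - i) i hh g

theorem pow_four_mem_Nnk_succ {m k : ℕ} {z : G} (hz : z ∈ Nnk G m k) : z ^ 4 ∈ Nnk G (m + 1) k :=
  pow_four_mem_Nnk_succ_of (Nnk_le_upperCentralSeriesStep m k) hz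

theorem sPow_sup_gamma_succ_le_Nnk (j : ℕ) :
    sPow (gamma G j) 4 ⊔ gamma G (j + 1) ≤ Nnk G (j + 1) j := by
  refine sup_le (sPow_le_iff.mpr fun x hx => ?_) fun x hx => ?_
  · simpa using pow_mem_Nnk le_rfl j.le_succ hx
  · simpa using pow_mem_Nnk j.le_succ le_rfl hx

theorem inv_pow_mul_mul_pow_mem_Nnk (x : G) {m k : ℕ} {y : G} (hy : y ∈ Nnk G m k) (d : ℕ) :
    (x ^ 4 ^ d)⁻¹ * (x * y) ^ 4 ^ d ∈ Nnk G (m + d) k := by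
  induction d with
  | zero => simpa using hy
  | succ d ih =>
    rw [pow_succ, pow_mul, pow_mul, ← add_assoc]
    exact inv_pow_mul_pow_mem (Nnk_le_upperCentralSeriesStep _ _ ih) (pow_four_mem_Nnk_succ ih)

end Filtration

theorem stmt_7_general (G : Type*) [Group G] (n j : ℕ) (hjn : j ≤ n)
    (x y : G) (hy : y ∈ sPow (gamma G j) 4 ⊔ gamma G (j + 1)) :
    (x ^ 4 ^ (n - j))⁻¹ * (x * y) ^ 4 ^ (n - j) ∈ Nnk G (n + 1) j := by
  have h := inv_pow_mul_mul_pow_mem_Nnk x (sPow_sup_gamma_succ_le_Nnk j hy) (n - j)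
  rwa [show j + 1 + (n - j) = n + 1 by omega] at h

theorem stmt_7 (G : Type*) [Group G] (n j : ℕ) (hj : 1 ≤ j) (hjn : j ≤ n)
    (x y : G) (hx : x ∈ gamma G j) (hy : y ∈ sPow (gamma G j) 4 ⊔ gamma G (j + 1)) :
    (x ^ 4 ^ (n - j))⁻¹ * (x * y) ^ 4 ^ (n - j) ∈ Nnk G (n + 1) j :=
  stmt_7_general G n j hjn x y hy
end
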